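/- Let (G,L) be an uncolorable pair. Then any two adjacent vertices of G are joined either by exactly one edge or by exactly two parallel edges of opposite sign; in particular no two vertices are joined by two parallel edges of the same sign, and no two vertices are joined by more than two parallel edges. -/

import Mathlib

open scoped Classical

/-- A signed graph: a finite loopless multigraph together with a sign `+1` or `-1`
on each edge. -/
structure SignedGraph where
  /-- vertex type -/
  V : Type
  /-- edge type -/
  E : Type
  fintypeV : Fintype V
  fintypeE : Fintype E
  decEqV : DecidableEq V
  /-- the two (distinct) endpoints of an edge, as an unordered pair -/
  ends : E → Sym2 V
  loopless : ∀ e : E, ¬ (ends e).IsDiag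
  /-- the sign of an edge -/
  sign : E → ℤ
  sign_unit : ∀ e : E, sign e = 1 ∨ sign e = -1

attribute [instance] SignedGraph.fintypeV SignedGraph.fintypeE SignedGraph.decEqV

namespace SignedGraph

variable (G : SignedGraph)

/-- The degree of a vertex: the number of edges incident with it. -/
noncomputable def degree (v : G.V) : ℕ :=
  (Finset.univ.filter (fun e : G.E => v ∈ G.ends e)).card

/-- The maximum degree `Δ(G)`. -/
noncomputable def maxDegree : ℕ :=
  Finset.univ.sup (fun v : G.V => G.degree v)

/-- Two vertices are adjacent if some edge joins them. -/
def Adj (v w : G.V) : Prop := ∃ e : G.E, G.ends e = s(v, w)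

/-- The simple graph of the adjacency relation (underlying simplification). -/
def adjGraph : SimpleGraph G.V where
  Adj := G.Adj
  symm := ⟨fun _ _ h => by obtain ⟨e, he⟩ := h; exact ⟨e, he.trans (Sym2.eq_swap)⟩⟩
  loopless := ⟨fun v h => by
    obtain ⟨e, he⟩ := h
    exact G.loopless e (by rw [he]; exact Sym2.mk_isDiag_iff.mpr rfl)⟩

/-- A signed graph is connected if its underlying graph is connected. -/
def Connected : Prop := G.adjGraph.Connected

/-- The underlying graph is simple: no two parallel edges. -/
def SimpleUnderlying : Prop := ∀ e f : G.E, G.ends e = G.ends f → e = f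

/-- A (proper) coloring of a signed graph. -/
def IsColoring (φ : G.V → ℤ) : Prop :=
  ∀ (e : G.E) (v w : G.V), G.ends e = s(v, w) → φ v ≠ G.sign e * φ w

/-- The color set `Z_k`:  `Z_{2h} = {±1, …, ±h}` and `Z_{2h+1} = Z_{2h} ∪ {0}`. -/
def ZSet (k : ℕ) : Set ℤ := {x : ℤ | 2 * |x| ≤ (k : ℤ) ∧ (x = 0 → Odd k)}

/-- The signed chromatic number `χ±(G)`: the least `k` such that `G` admits a
coloring with image contained in `Z_k`. -/
noncomputable def signedChromaticNumber : ℕ :=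
  sInf {k : ℕ | ∃ φ : G.V → ℤ, G.IsColoring φ ∧ ∀ v : G.V, φ v ∈ ZSet k}

/-- `G` admits a coloring from the lists `L`. -/
def ListColorable (L : G.V → Finset ℤ) : Prop :=
  ∃ φ : G.V → ℤ, G.IsColoring φ ∧ ∀ v : G.V, φ v ∈ L v

/-- The signed choice number `χℓ±(G)`. -/
noncomputable def signedChoiceNumber : ℕ :=
  sInf {k : ℕ | ∀ L : G.V → Finset ℤ, (∀ v : G.V, (L v).card = k) → G.ListColorable L}

/-- `G` is degree choosable. -/
def DegreeChoosable : Prop :=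
  ∀ L : G.V → Finset ℤ, (∀ v : G.V, (L v).card = G.degree v) → G.ListColorable L

/-- `(G, L)` is an uncolorable pair. -/
def UncolorablePair (L : G.V → Finset ℤ) : Prop :=
  G.Connected ∧ (∀ v : G.V, G.degree v ≤ (L v).card) ∧ ¬ G.ListColorable L

/-- Walks in a signed multigraph. -/
inductive Walk (G : SignedGraph) : G.V → G.V → Type
  | nil (v : G.V) : Walk G v v
  | cons {v w u : G.V} (e : G.E) (he : G.ends e = s(v, w)) (p : Walk G w u) : Walk G v u

namespace Walk

variable {G}

/-- The list of edges of a walk. -/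
def edges : ∀ {v w : G.V}, Walk G v w → List G.E
  | _, _, .nil _ => []
  | _, _, .cons e _ p => e :: edges p

/-- The list of vertices of a walk. -/
def support : ∀ {v w : G.V}, Walk G v w → List G.V
  | _, _, .nil v => [v]
  | v, _, .cons _ _ p => v :: support p

/-- The length of a walk. -/
def length {v w : G.V} (p : Walk G v w) : ℕ := p.edges.length

/-- The sign product of a walk. -/
def signProd {v w : G.V} (p : Walk G v w) : ℤ := (p.edges.map G.sign).prod

/-- A cycle: a nonempty closed walk with no repeated edges and no repeated
vertices (except the first = last). -/
def IsCycle {v : G.V} (p : Walk G v v) : Prop :=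
  p.edges ≠ [] ∧ p.edges.Nodup ∧ p.support.tail.Nodup

end Walk

/-- A signed graph is balanced if every cycle has positive sign product. -/
def Balanced : Prop := ∀ (v : G.V) (p : Walk G v v), p.IsCycle → p.signProd = 1

/-- A signed graph is antibalanced if every even cycle has positive sign product
and every odd cycle has negative sign product. -/
def Antibalanced : Prop :=
  ∀ (v : G.V) (p : Walk G v v), p.IsCycle → p.signProd = (-1) ^ p.length

/-- `G` is balanced with parts `X`, `Y`: the vertex set is the disjoint union of
`X` and `Y` and an edge is negative iff it joins `X` to `Y`. -/
def BalancedWithParts (X Y : Set G.V) : Prop :=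
  X ∪ Y = Set.univ ∧ Disjoint X Y ∧
  ∀ (e : G.E) (v w : G.V), G.ends e = s(v, w) →
    (G.sign e = -1 ↔ (v ∈ X ∧ w ∈ Y) ∨ (v ∈ Y ∧ w ∈ X))

/-- The underlying graph is a complete (simple) graph. -/
def IsCompleteGraph : Prop :=
  G.SimpleUnderlying ∧ ∀ v w : G.V, v ≠ w → G.Adj v w

/-- `G` is a balanced complete graph. -/
def IsBalancedComplete : Prop := G.IsCompleteGraph ∧ G.Balanced

/-- The underlying graph is a cycle. -/
def IsCycleGraph : Prop :=
  G.Connected ∧ G.SimpleUnderlying ∧ ∀ v : G.V, G.degree v = 2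

/-- `G` is a balanced odd cycle. -/
def IsBalancedOddCycle : Prop :=
  G.IsCycleGraph ∧ G.Balanced ∧ Odd (Fintype.card G.V)

/-- `G` is an unbalanced even cycle. -/
def IsUnbalancedEvenCycle : Prop :=
  G.IsCycleGraph ∧ ¬ G.Balanced ∧ Even (Fintype.card G.V)

/-- Every edge of `G` comes in a pair of parallel edges of opposite sign, and
any two vertices are joined by at most two edges. -/
def Doubled : Prop :=
  ∀ (e : G.E) (v w : G.V), G.ends e = s(v, w) →
    ∃ f : G.E, f ≠ e ∧ G.ends f = s(v, w) ∧ G.sign f = - G.sign e ∧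
      ∀ g : G.E, G.ends g = s(v, w) → g = e ∨ g = f

/-- `G` is a `2Kₙ` for some `n ≥ 2`. -/
def IsDoubleComplete : Prop :=
  2 ≤ Fintype.card G.V ∧ G.Doubled ∧ ∀ v w : G.V, v ≠ w → G.Adj v w

/-- `G` is a `2Cₙ` for some odd `n ≥ 3`. -/
def IsDoubleOddCycle : Prop :=
  G.Connected ∧ G.Doubled ∧ (∀ v : G.V, G.degree v = 4) ∧ Odd (Fintype.card G.V)

/-- A brick. -/
def IsBrick : Prop :=
  G.IsBalancedComplete ∨ G.IsBalancedOddCycle ∨ G.IsUnbalancedEvenCycle ∨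
    G.IsDoubleComplete ∨ G.IsDoubleOddCycle

/-- A subgraph of a signed graph. -/
structure Subgraph (G : SignedGraph) where
  verts : Set G.V
  edges : Set G.E
  ends_mem : ∀ e ∈ edges, ∀ v ∈ G.ends e, v ∈ verts

namespace Subgraph

variable {G}

/-- A subgraph, regarded as a signed graph in its own right. -/
noncomputable def toSG (H : G.Subgraph) : SignedGraph where
  V := H.verts
  E := H.edges
  fintypeV := Fintype.ofFinite _
  fintypeE := Fintype.ofFinite _
  decEqV := inferInstance
  ends := fun e =>
    s((⟨(G.ends e.1).out.1, H.ends_mem e.1 e.2 _ (Sym2.out_fst_mem _)⟩ : H.verts),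
      (⟨(G.ends e.1).out.2, H.ends_mem e.1 e.2 _ (Sym2.out_snd_mem _)⟩ : H.verts))
  loopless := fun e h => by
    rw [Sym2.mk_isDiag_iff, Subtype.mk.injEq] at h
    exact G.loopless e.1 (by
      rw [← (G.ends e.1).out_eq]
      exact Sym2.mk_isDiag_iff.mpr h)
  sign := fun e => G.sign e.1
  sign_unit := fun e => G.sign_unit e.1

/-- Delete a vertex (and all incident edges) from a subgraph. -/
def delete (H : G.Subgraph) (v : G.V) : G.Subgraph where
  verts := H.verts \ {v}
  edges := {e ∈ H.edges | v ∉ G.ends e}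
  ends_mem := fun e he w hw =>
    ⟨H.ends_mem e he.1 w hw, fun h => he.2 (by rwa [Set.mem_singleton_iff.mp h] at hw)⟩

/-- Subgraph inclusion. -/
def Le (H K : G.Subgraph) : Prop := H.verts ⊆ K.verts ∧ H.edges ⊆ K.edges

/-- `v` is a separating (cut) vertex of the subgraph `H`. -/
def IsCutVertex (H : G.Subgraph) (v : G.V) : Prop :=
  v ∈ H.verts ∧ (H.delete v).verts.Nonempty ∧ ¬ (H.delete v).toSG.Connected

/-- `B` is a block of `G`: a maximal connected subgraph without a cut vertex. -/
def IsBlock (B : G.Subgraph) : Prop :=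
  B.toSG.Connected ∧ (∀ v : G.V, ¬ B.IsCutVertex v) ∧
  ∀ B' : G.Subgraph, B.Le B' → B'.toSG.Connected →
    (∀ v : G.V, ¬ B'.IsCutVertex v) → B'.Le B

/-- The degree of a vertex in a subgraph. -/
noncomputable def degree (H : G.Subgraph) (v : G.V) : ℕ :=
  (Finset.univ.filter (fun e : G.E => e ∈ H.edges ∧ v ∈ G.ends e)).card

/-- The minimum degree of a subgraph. -/
noncomputable def minDegree (H : G.Subgraph) : ℕ :=
  sInf {d : ℕ | ∃ v ∈ H.verts, H.degree v = d}

/-- The subgraph admits a coloring from the lists `L`. -/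
def ListColorable (H : G.Subgraph) (L : G.V → Finset ℤ) : Prop :=
  ∃ φ : G.V → ℤ,
    (∀ e ∈ H.edges, ∀ v w : G.V, G.ends e = s(v, w) → φ v ≠ G.sign e * φ w) ∧
    ∀ v ∈ H.verts, φ v ∈ L v

/-- A proper subgraph. -/
def IsProper (H : G.Subgraph) : Prop :=
  H.verts ≠ Set.univ ∨ H.edges ≠ Set.univ

end Subgraph

/-- The subgraph consisting of all of `G`. -/
def topSubgraph : G.Subgraph := ⟨Set.univ, Set.univ, fun _ _ _ _ => trivial⟩

/-- A separating (cut) vertex of `G`. -/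
def IsCutVertex (v : G.V) : Prop := G.topSubgraph.IsCutVertex v

/-- The coloring number `col(G)`: one plus the maximum over all (nonempty)
subgraphs of the minimum degree. -/
noncomputable def coloringNumber : ℕ :=
  1 + sSup {d : ℕ | ∃ H : G.Subgraph, H.verts.Nonempty ∧ H.minDegree = d}

/-- The subgraph induced by a vertex set `X`. -/
def induced (X : Set G.V) : G.Subgraph where
  verts := X
  edges := {e : G.E | ∀ v ∈ G.ends e, v ∈ X}
  ends_mem := fun e he v hv => he v hv

/-- `G` is `L`-critical. -/
def LCritical (L : G.V → Finset ℤ) : Prop :=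
  ¬ G.ListColorable L ∧ ∀ H : G.Subgraph, H.IsProper → H.ListColorable L

/-- `G` is `k`-critical (with respect to the signed chromatic number). -/
def KCritical (k : ℕ) : Prop :=
  G.signedChromaticNumber = k ∧
  ∀ H : G.Subgraph, H.IsProper → H.toSG.signedChromaticNumber ≤ k - 1

/-- `G` is `k`-list-critical. -/
def KListCritical (k : ℕ) : Prop :=
  ∃ L : G.V → Finset ℤ, (∀ v : G.V, (L v).card = k - 1) ∧ G.LCritical L

/-- The signed graph `2H` obtained from a simple graph `H` by replacing every
edge by a pair of parallel edges, one positive and one negative. -/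
noncomputable def double {W : Type} [Fintype W] [DecidableEq W] (H : SimpleGraph W) :
    SignedGraph where
  V := W
  E := H.edgeSet × Bool
  fintypeV := inferInstance
  fintypeE := Fintype.ofFinite _
  decEqV := inferInstance
  ends := fun e => e.1.1
  loopless := fun e => H.not_isDiag_of_mem_edgeSet e.1.2
  sign := fun e => if e.2 then 1 else -1
  sign_unit := fun e => by by_cases h : e.2 <;> simp [h]

end SignedGraph

/-! Suppose two parallel edges `e`, `f` of the same sign join `u` and `x`. Colour `G` greedily,
in order of decreasing distance from `u`. Every vertex other than `u` is coloured before one of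
its neighbours, so it meets fewer constraints than its degree. When `u` is coloured last, `e` and
`f` forbid the same colour `σ(e)φ(x)`, so again fewer than `d(u)` colours are excluded. Hence
`G` is `L`-colourable, and by counting signs the edges joining two vertices are then one edge or a
pair of opposite sign. -/

theorem SimpleGraph.Connected.exists_injective_rank_increasing_toward {V : Type*} [Fintype V]
    {H : SimpleGraph V} (hH : H.Connected) (u : V) :
    ∃ r : V → ℕ, Function.Injective r ∧
      ∀ v, v ≠ u → r v < r u ∧ ∃ y, H.Adj v y ∧ r v < r y := by
  set n := Fintype.card V
  have hn : 0 < n := Fintype.card_pos_iff.mpr ⟨u⟩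
  let idx := Fintype.equivFin V
  have hidx : ∀ v, (idx v : ℕ) < n := fun v => (idx v).isLt
  have hdist : ∀ v, H.dist v u < n := fun v => by
    obtain ⟨p, hp, hlen⟩ := hH.exists_path_of_dist v u
    exact hlen ▸ hp.length_lt
  -- Lexicographic: first by decreasing distance to `u`, then by an enumeration of `V`.
  let r : V → ℕ := fun v => n * (n - H.dist v u) + idx v
  have hmod : ∀ v, r v % n = idx v := fun v => by
    simp only [r, Nat.mul_add_mod, Nat.mod_eq_of_lt (hidx v)]
  have hdiv : ∀ v, r v / n = n - H.dist v u := fun v => by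
    simp only [r, Nat.mul_add_div hn, Nat.div_eq_of_lt (hidx v), add_zero]
  have hcloser : ∀ v w, H.dist w u < H.dist v u → r v < r w := fun v w h =>
    Nat.lt_of_div_lt_div (c := n) (by rw [hdiv, hdiv]; have := hdist v; omega)
  refine ⟨r, fun a b hab => idx.injective (Fin.ext (by rw [← hmod a, ← hmod b, hab])), ?_⟩
  intro v hv
  refine ⟨hcloser v u (by simpa using hH.pos_dist_of_ne hv), ?_⟩
  obtain ⟨p, hp⟩ := hH.exists_walk_length_eq_dist v u
  cases p with
  | nil => exact absurd rfl hv
  | cons hadj q =>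
    refine ⟨_, hadj, hcloser _ _ ?_⟩
    have := SimpleGraph.dist_le q
    rw [← hp, SimpleGraph.Walk.length_cons]
    omega

namespace SignedGraph

open Finset

variable {G : SignedGraph}

lemma ne_of_ends_eq {e : G.E} {v w : G.V} (he : G.ends e = s(v, w)) : v ≠ w := by
  rintro rfl
  exact G.loopless e (he ▸ Sym2.mk_isDiag_iff.mpr rfl)

lemma mem_ends_of_ends_eq {e : G.E} {v w : G.V} (he : G.ends e = s(v, w)) : v ∈ G.ends e :=
  he ▸ Sym2.mem_mk_left v w

lemma eq_of_ends_eq_of_ends_eq {e : G.E} {v w w' : G.V} (he : G.ends e = s(v, w))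
    (he' : G.ends e = s(v, w')) : w = w' := by
  rcases Sym2.eq_iff.mp (he.symm.trans he') with ⟨-, h⟩ | ⟨rfl, rfl⟩
  · exact h
  · exact absurd rfl (ne_of_ends_eq he)

lemma sign_mul_self (e : G.E) : G.sign e * G.sign e = 1 := by
  rcases G.sign_unit e with h | h <;> simp [h]

lemma sign_eq_neg_of_ne {e f : G.E} (h : G.sign e ≠ G.sign f) : G.sign e = - G.sign f := by
  rcases G.sign_unit e with he | he <;> rcases G.sign_unit f with hf | hf <;> simp_all

variable (G) in
noncomputable def lowerIncidences (r : G.V → ℕ) (v : G.V) : Finset (G.E × G.V) :=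
  univ.filter fun p => G.ends p.1 = s(v, p.2) ∧ r p.2 < r v

variable (G) in
noncomputable def forbiddenColors (r : G.V → ℕ) (φ : G.V → ℤ) (v : G.V) : Finset ℤ :=
  (G.lowerIncidences r v).image fun p => G.sign p.1 * φ p.2

section Greedy

variable {r : G.V → ℕ} {v : G.V}

lemma mem_lowerIncidences {p : G.E × G.V} :
    p ∈ G.lowerIncidences r v ↔ G.ends p.1 = s(v, p.2) ∧ r p.2 < r v := by
  simp [lowerIncidences]

lemma forbiddenColors_congr {φ ψ : G.V → ℤ} (h : ∀ w, r w < r v → φ w = ψ w) :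
    G.forbiddenColors r φ v = G.forbiddenColors r ψ v :=
  image_congr fun p hp => by simp only [h _ (mem_lowerIncidences.mp hp).2]

lemma isColoring_of_notMem_forbiddenColors (hr : Function.Injective r) {φ : G.V → ℤ}
    (hφ : ∀ v, φ v ∉ G.forbiddenColors r φ v) : G.IsColoring φ := by
  have below : ∀ e v w, G.ends e = s(v, w) → r w < r v → φ v ≠ G.sign e * φ w :=
    fun e v w he hlt heq => hφ v (heq ▸ mem_image.mpr ⟨(e, w), mem_lowerIncidences.mpr ⟨he, hlt⟩, rfl⟩)
  intro e v w he
  rcases (hr.ne (ne_of_ends_eq he)).lt_or_gt with hlt | hlt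
  · intro heq
    refine below e w v (he.trans Sym2.eq_swap) hlt ?_
    rw [heq, ← mul_assoc, sign_mul_self, one_mul]
  · exact below e v w he hlt

theorem listColorable_of_card_forbiddenColors_lt (hr : Function.Injective r)
    {L : G.V → Finset ℤ} (h : ∀ φ v, #(G.forbiddenColors r φ v) < #(L v)) :
    G.ListColorable L := by
  have colorBelow : ∀ n, ∃ φ : G.V → ℤ, ∀ v, r v < n → φ v ∈ L v \ G.forbiddenColors r φ v := by
    intro n
    induction n with
    | zero => exact ⟨0, by simp⟩
    | succ n ih =>
      obtain ⟨φ, hφ⟩ := ih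
      by_cases hn : ∃ v₀, r v₀ = n
      · obtain ⟨v₀, rfl⟩ := hn
        obtain ⟨c, hcL, hcF⟩ := exists_mem_notMem_of_card_lt_card (h φ v₀)
        refine ⟨Function.update φ v₀ c, fun v hv => ?_⟩
        have hagree : ∀ w, r w < r v → Function.update φ v₀ c w = φ w := fun w hw =>
          Function.update_of_ne (by rintro rfl; omega) _ _
        rw [forbiddenColors_congr hagree]
        by_cases hvv₀ : v = v₀
        · subst hvv₀
          simpa using ⟨hcL, hcF⟩
        · rw [Function.update_of_ne hvv₀]
          exact hφ v (lt_of_le_of_ne (Nat.lt_succ_iff.mp hv) (hvv₀ ∘ fun h => hr h))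
      · push Not at hn
        exact ⟨φ, fun v hv => hφ v (lt_of_le_of_ne (Nat.lt_succ_iff.mp hv) (hn v))⟩
  obtain ⟨φ, hφ⟩ := colorBelow (univ.sup r + 1)
  have hall : ∀ v, φ v ∈ L v \ G.forbiddenColors r φ v :=
    fun v => hφ v (Nat.lt_succ_of_le (le_sup (mem_univ v)))
  exact ⟨φ, isColoring_of_notMem_forbiddenColors hr fun v => (mem_sdiff.mp (hall v)).2,
    fun v => (mem_sdiff.mp (hall v)).1⟩

lemma card_lowerIncidences_le {s : Finset G.E} (hs : ∀ p ∈ G.lowerIncidences r v, p.1 ∈ s) :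
    #(G.lowerIncidences r v) ≤ #s :=
  card_le_card_of_injOn Prod.fst hs fun p hp q hq hpq => by
    rw [mem_coe, mem_lowerIncidences] at hp hq
    exact Prod.ext hpq (eq_of_ends_eq_of_ends_eq hp.1 (hpq ▸ hq.1))

lemma card_lowerIncidences_le_degree : #(G.lowerIncidences r v) ≤ G.degree v :=
  card_lowerIncidences_le fun _ hp =>
    mem_filter.mpr ⟨mem_univ _, mem_ends_of_ends_eq (mem_lowerIncidences.mp hp).1⟩

lemma card_lowerIncidences_lt_degree {e : G.E} {y : G.V} (he : G.ends e = s(v, y))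
    (hy : r v < r y) : #(G.lowerIncidences r v) < G.degree v := by
  have hmem : e ∈ univ.filter fun e : G.E => v ∈ G.ends e :=
    mem_filter.mpr ⟨mem_univ _, mem_ends_of_ends_eq he⟩
  refine (card_lowerIncidences_le fun p hp => ?_).trans_lt (card_erase_lt_of_mem hmem)
  obtain ⟨hp, hlt⟩ := mem_lowerIncidences.mp hp
  refine mem_erase.mpr ⟨?_, mem_filter.mpr ⟨mem_univ _, mem_ends_of_ends_eq hp⟩⟩
  rintro rfl
  rw [eq_of_ends_eq_of_ends_eq hp he] at hlt
  omega

lemma card_forbiddenColors_lt_of_parallel {e f : G.E} {x : G.V} (hef : e ≠ f)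
    (he : G.ends e = s(v, x)) (hf : G.ends f = s(v, x)) (hs : G.sign e = G.sign f)
    (hx : r x < r v) (φ : G.V → ℤ) :
    #(G.forbiddenColors r φ v) < #(G.lowerIncidences r v) := by
  refine card_image_le.lt_of_ne fun hcard => hef ?_
  have hinj := card_image_iff.mp hcard
  have := hinj (x₁ := (e, x)) (x₂ := (f, x)) (mem_lowerIncidences.mpr ⟨he, hx⟩)
    (mem_lowerIncidences.mpr ⟨hf, hx⟩) (by simp only [hs])
  exact congrArg Prod.fst this

end Greedy

theorem listColorable_of_parallel_same_sign {L : G.V → Finset ℤ} (hconn : G.Connected)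
    (hdeg : ∀ v, G.degree v ≤ #(L v)) {u x : G.V} {e f : G.E} (hef : e ≠ f)
    (he : G.ends e = s(u, x)) (hf : G.ends f = s(u, x)) (hs : G.sign e = G.sign f) :
    G.ListColorable L := by
  obtain ⟨r, hr, hrank⟩ :=
    SimpleGraph.Connected.exists_injective_rank_increasing_toward (H := G.adjGraph) hconn u
  refine listColorable_of_card_forbiddenColors_lt hr fun φ v => ?_
  by_cases hv : v = u
  · subst hv
    calc #(G.forbiddenColors r φ v)
        < #(G.lowerIncidences r v) :=
          card_forbiddenColors_lt_of_parallel hef he hf hs (hrank x (ne_of_ends_eq he).symm).1 φ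
      _ ≤ G.degree v := card_lowerIncidences_le_degree
      _ ≤ #(L v) := hdeg v
  · obtain ⟨y, ⟨e', he'⟩, hy⟩ := (hrank v hv).2
    calc #(G.forbiddenColors r φ v)
        ≤ #(G.lowerIncidences r v) := card_image_le
      _ < G.degree v := card_lowerIncidences_lt_degree he' hy
      _ ≤ #(L v) := hdeg v

theorem existsUnique_or_oppositePair_of_sign_injective {v w : G.V} (hadj : G.Adj v w)
    (hinj : ∀ e f, G.ends e = s(v, w) → G.ends f = s(v, w) → G.sign e = G.sign f → e = f) :
    (∃! e : G.E, G.ends e = s(v, w)) ∨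
      (∃ e f : G.E, e ≠ f ∧ G.ends e = s(v, w) ∧ G.ends f = s(v, w) ∧
        G.sign e = - G.sign f ∧ ∀ g : G.E, G.ends g = s(v, w) → g = e ∨ g = f) := by
  obtain ⟨e, he⟩ := hadj
  by_cases hsecond : ∃ f, G.ends f = s(v, w) ∧ f ≠ e
  · obtain ⟨f, hf, hfe⟩ := hsecond
    have hsign : G.sign e ≠ G.sign f := fun h => hfe (hinj e f he hf h).symm
    refine Or.inr ⟨e, f, hfe.symm, he, hf, sign_eq_neg_of_ne hsign, fun g hg => ?_⟩
    by_contra! hg'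
    have hge := sign_eq_neg_of_ne fun h => hg'.1 (hinj g e hg he h)
    have hgf := sign_eq_neg_of_ne fun h => hg'.2 (hinj g f hg hf h)
    exact hsign (by omega)
  · push Not at hsecond
    exact Or.inl ⟨e, he, hsecond⟩

end SignedGraph

/-- In an uncolorable pair, any two adjacent vertices are joined
by exactly one edge or by exactly two parallel edges of opposite sign. -/
theorem uncolorablePair_multiplicity (G : SignedGraph) (L : G.V → Finset ℤ)
    (h : G.UncolorablePair L) :
    ∀ v w : G.V, G.Adj v w →
      (∃! e : G.E, G.ends e = s(v, w)) ∨
      (∃ e f : G.E, e ≠ f ∧ G.ends e = s(v, w) ∧ G.ends f = s(v, w) ∧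
        G.sign e = - G.sign f ∧ ∀ g : G.E, G.ends g = s(v, w) → g = e ∨ g = f) := by
  obtain ⟨hconn, hdeg, hncol⟩ := h
  intro v w hadj
  refine SignedGraph.existsUnique_or_oppositePair_of_sign_injective hadj fun e f he hf hs => ?_
  by_contra hef
  exact hncol (SignedGraph.listColorable_of_parallel_same_sign hconn hdeg hef he hf hs)
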